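/- Let G be the subgroup of the symmetric group on {1,...,10} generated by the permutations α = (1 5)(2 8)(4 7) and σ = (2 5 7 6 10 9)(3 8 4). Then the natural action of G on the set {1,...,10} is transitive and primitive (i.e., the action is transitive and admits no nontrivial block system). -/

import Mathlib

/-- The permutation `α = (1 5)(2 8)(4 7)` of `{1,…,10}`, written on `Fin 10`
(symbol `i` corresponds to index `i-1`). -/
def permAlpha : Equiv.Perm (Fin 10) :=
  Equiv.swap 0 4 * Equiv.swap 1 7 * Equiv.swap 3 6

/-- The permutation `σ = (2 5 7 6 10 9)(3 8 4)` of `{1,…,10}`, written on `Fin 10`. -/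
def permSigma : Equiv.Perm (Fin 10) :=
  List.formPerm [(1 : Fin 10), 4, 6, 5, 9, 8] * List.formPerm [(2 : Fin 10), 7, 3]

/-- The subgroup of `S₁₀` generated by `α` and `σ`. -/
def G : Subgroup (Equiv.Perm (Fin 10)) := Subgroup.closure {permAlpha, permSigma}

/-!
The group is transitive, and `σ²` has order `3` and fixes only the point `1`. A block `B`
through `1` is then stable under `σ²`, so its other points fall into `3`-cycles and
`|B| ≡ 1 (mod 3)`. Since `|B|` also divides `10`, it is `1` or `10`.
-/

open MulAction Pointwise

namespace MulAction

variable {G X : Type*} [Group G] [MulAction G X]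

theorem IsBlock.ncard_modEq_one [Finite X] {B : Set X} (hB : IsBlock G B) {p n : ℕ}
    [Fact p.Prime] {g : G} (hg : g ^ p ^ n = 1) {a : X} (ha : a ∈ B)
    (hfix : fixedBy X g = {a}) : B.ncard ≡ 1 [MOD p] := by
  classical
  have := Fintype.ofFinite X
  have hga : g • a = a := mem_fixedBy.mp (hfix ▸ Set.mem_singleton a)
  have hgB : g • B = B := hB.smul_eq_of_mem ha (hga.symm ▸ ha)
  have hstable : ∀ x, toPermHom G X g x ∈ B ↔ x ∈ B := fun x => by
    rw [toPermHom_apply, toPerm_apply]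
    nth_rw 1 [← hgB]
    exact Set.smul_mem_smul_set_iff
  set π := (toPermHom G X g).subtypePerm hstable
  have hπ : π ^ p ^ n = 1 := by
    rw [Equiv.Perm.subtypePerm_pow]
    ext x
    simp only [← map_pow, hg, map_one]
    rfl
  have hsupp : π.supportᶜ = {⟨a, ha⟩} := by
    ext x
    simp [Equiv.Perm.mem_support, π, Subtype.ext_iff, ← mem_fixedBy, hfix]
  calc B.ncard = Fintype.card B := by rw [Set.ncard_eq_toFinset_card', Set.toFinset_card]
    _ ≡ π.supportᶜ.card [MOD p] := (Equiv.Perm.card_compl_support_modEq hπ).symm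
    _ = 1 := by rw [hsupp, Finset.card_singleton]

theorem IsPreprimitive.of_fixedBy_eq_singleton [IsPretransitive G X] [Finite X] {p n : ℕ}
    [Fact p.Prime] {g : G} (hg : g ^ p ^ n = 1) {a : X} (hfix : fixedBy X g = {a})
    (hcard : ∀ d, d ∣ Nat.card X → d ≡ 1 [MOD p] → d = 1 ∨ d = Nat.card X) :
    IsPreprimitive G X :=
  .of_isTrivialBlock_base a fun ha hB => by
    rcases hcard _ (hB.ncard_dvd_card ⟨a, ha⟩) (hB.ncard_modEq_one hg ha hfix) with h | h
    · obtain ⟨x, rfl⟩ := Set.ncard_eq_one.mp h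
      exact Or.inl Set.subsingleton_singleton
    · exact Or.inr ((Set.eq_univ_iff_ncard _).mpr h)

end MulAction

theorem permAlpha_mem_G : permAlpha ∈ G := Subgroup.subset_closure (Set.mem_insert _ _)

theorem permSigma_mem_G : permSigma ∈ G :=
  Subgroup.subset_closure (Set.mem_insert_of_mem _ rfl)

-- `α` moves `1` into the `6`-cycle of `σ`, and then a point of it into the `3`-cycle.
theorem exists_pow_mul_permAlpha_mul_pow_mul_permAlpha_apply_zero :
    ∀ y : Fin 10, ∃ j k : Fin 6,
      (permSigma ^ (k : ℕ) * permAlpha * permSigma ^ (j : ℕ) * permAlpha) 0 = y := by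
  decide

theorem permSigma_sq_apply_eq_self_iff : ∀ x : Fin 10, (permSigma ^ 2) x = x ↔ x = 0 := by
  decide

set_option maxRecDepth 4000 in
theorem permSigma_sq_pow_three : (permSigma ^ 2) ^ 3 = 1 := by decide

theorem isPretransitive_G : IsPretransitive G (Fin 10) := by
  rw [isPretransitive_iff_base 0]
  intro y
  obtain ⟨j, k, h⟩ := exists_pow_mul_permAlpha_mul_pow_mul_permAlpha_apply_zero y
  have hα := permAlpha_mem_G
  have hσ := permSigma_mem_G
  exact ⟨⟨_, mul_mem (mul_mem (mul_mem (pow_mem hσ k) hα) (pow_mem hσ j)) hα⟩, h⟩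

theorem eq_one_or_eq_ten_of_dvd_ten_of_modEq_one {d : ℕ} (hd : d ∣ 10) (h : d ≡ 1 [MOD 3]) :
    d = 1 ∨ d = 10 := by
  have := Nat.le_of_dvd (by norm_num) hd
  interval_cases d <;> simp_all [Nat.ModEq]

theorem isPreprimitive_G : IsPreprimitive G (Fin 10) :=
  have := isPretransitive_G
  .of_fixedBy_eq_singleton (p := 3) (n := 1) (a := 0)
    (g := ⟨permSigma ^ 2, pow_mem permSigma_mem_G 2⟩)
    (Subtype.ext permSigma_sq_pow_three)
    (Set.ext fun x => by simp [mem_fixedBy, permSigma_sq_apply_eq_self_iff])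
    (fun _ => by simpa using eq_one_or_eq_ten_of_dvd_ten_of_modEq_one)

/-- The natural action of `G = ⟨α, σ⟩` on `{1,…,10}` is transitive and primitive:
it is pretransitive and every block of the action is trivial (a subsingleton or
the whole set), i.e. there is no nontrivial block system. -/
theorem stmt10 :
    MulAction.IsPretransitive G (Fin 10) ∧
    ∀ B : Set (Fin 10), MulAction.IsBlock G B → B.Subsingleton ∨ B = Set.univ :=
  ⟨isPreprimitive_G.toIsPretransitive, fun _ => isPreprimitive_G.isTrivialBlock_of_isBlock⟩
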